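/- arXiv:0801.4432 — 2 statements merged into one kernel-verified Lean document; each statement's English description precedes it below -/
import Mathlib

section
/- Let P ⊂ ℝⁿ be a simplex with vertices v₀,…,v_d, and let t ≥ 0 be an integer. For j ∈ {0,…,d} define Q_j = (t+d)·P + v_j (the dilate of P by t+d translated by v_j). Then the union ⋃_{j=0}^{d} Q_j equals (t+d+1)·P. -/
/-!
The inclusion `⊆` is convexity: `(s + 1) • P = P + s • P` and `v j ∈ P`. Conversely, write a
point of `(s + 1) • P` as `∑ i, (s + 1) * w i • v i` with barycentric weights `w`. The largest
weight satisfies `w j ≥ 1 / card ι ≥ 1 / (s + 1)`, so removing one copy of `v j` leaves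
nonnegative coefficients with total `s`, i.e. a point of `v j +ᵥ s • P`.
-/

open Set Finset Pointwise

variable {𝕜 E ι : Type*} [Field 𝕜] [LinearOrder 𝕜] [IsStrictOrderedRing 𝕜]
  [AddCommGroup E] [Module 𝕜 E] [Fintype ι]

theorem convexHull_range_eq_image_stdSimplex (v : ι → E) :
    convexHull 𝕜 (range v) = (fun w ↦ ∑ i, w i • v i) '' stdSimplex 𝕜 ι := by
  classical
  have hv : range v = Fintype.linearCombination 𝕜 v '' range fun i ↦ Pi.single i 1 := by
    simp [← range_comp, Function.comp_def, Fintype.linearCombination_apply, Pi.single_apply]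
  rw [hv, ← LinearMap.image_convexHull, convexHull_rangle_single_eq_stdSimplex]
  rfl

theorem exists_one_le_card_mul_of_mem_stdSimplex [Nonempty ι] {w : ι → 𝕜}
    (hw : w ∈ stdSimplex 𝕜 ι) : ∃ j, 1 ≤ Fintype.card ι * w j := by
  have hcard : (0 : 𝕜) < Fintype.card ι := by exact_mod_cast Fintype.card_pos
  obtain ⟨j, -, hj⟩ := Finset.exists_le_of_sum_le univ_nonempty
    (f := fun _ ↦ (Fintype.card ι : 𝕜)⁻¹) (g := w) (by simp [hcard.ne', hw.2])
  exact ⟨j, by rwa [← inv_mul_le_iff₀ hcard, mul_one]⟩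

theorem sum_smul_mem_sum_smul_convexHull_range [Nonempty ι] (v : ι → E) {c : ι → 𝕜}
    (hc : ∀ i, 0 ≤ c i) : ∑ i, c i • v i ∈ (∑ i, c i) • convexHull 𝕜 (range v) := by
  rcases (Finset.sum_nonneg fun i _ ↦ hc i).eq_or_lt with hzero | hpos
  · have hc0 : c = 0 := (Fintype.sum_eq_zero_iff_of_nonneg hc).1 hzero.symm
    rw [← hzero, zero_smul_set (convexHull_nonempty_iff.2 (range_nonempty v))]
    simp [hc0]
  · refine ⟨(∑ i, c i)⁻¹ • ∑ i, c i • v i, ?_, smul_inv_smul₀ hpos.ne' _⟩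
    exact Finset.centerMass_mem_convexHull _ (fun i _ ↦ hc i) hpos fun i _ ↦ mem_range_self i

theorem iUnion_vadd_smul_convexHull_range (v : ι → E) {s : 𝕜}
    (hs : (Fintype.card ι : 𝕜) - 1 ≤ s) :
    ⋃ j, v j +ᵥ s • convexHull 𝕜 (range v) = (s + 1) • convexHull 𝕜 (range v) := by
  classical
  cases isEmpty_or_nonempty ι
  · simp [range_eq_empty]
  have hcard : (1 : 𝕜) ≤ Fintype.card ι := by exact_mod_cast Fintype.card_pos
  have hs0 : 0 ≤ s := by linarith
  refine Subset.antisymm (iUnion_subset fun j ↦ ?_) ?_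
  · rintro _ ⟨_, ⟨p, hp, rfl⟩, rfl⟩
    rw [add_comm s, (convex_convexHull 𝕜 _).add_smul zero_le_one hs0, one_smul]
    exact add_mem_add (subset_convexHull 𝕜 _ (mem_range_self j)) (smul_mem_smul_set hp)
  · rintro _ ⟨_, hp, rfl⟩
    rw [convexHull_range_eq_image_stdSimplex] at hp
    obtain ⟨w, hw, rfl⟩ := hp
    obtain ⟨j, hj⟩ := exists_one_le_card_mul_of_mem_stdSimplex hw
    have hwj : 1 ≤ (s + 1) * w j :=
      hj.trans (mul_le_mul_of_nonneg_right (by linarith) (hw.1 j))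
    set c : ι → 𝕜 := (s + 1) • w - Pi.single j 1
    have hc : ∀ i, 0 ≤ c i := by
      intro i
      rcases eq_or_ne i j with rfl | hij
      · simpa [c] using hwj
      · simpa [c, hij] using mul_nonneg (by linarith : 0 ≤ s + 1) (hw.1 i)
    have hc_sum : ∑ i, c i = s := by simp [c, ← Finset.mul_sum, hw.2]
    have hc_comb : (s + 1) • ∑ i, w i • v i = v j +ᵥ ∑ i, c i • v i := by
      simp [c, sub_smul, Finset.sum_sub_distrib, Finset.smul_sum, smul_smul]
    change (s + 1) • ∑ i, w i • v i ∈ _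
    rw [hc_comb]
    exact mem_iUnion.2
      ⟨j, vadd_mem_vadd_set (hc_sum ▸ sum_smul_mem_sum_smul_convexHull_range v hc)⟩

theorem stmt8_general (n d : ℕ) (v : Fin (d + 1) → (Fin n → ℝ))
    (t : ℕ) :
    (⋃ j, v j +ᵥ (((t : ℝ) + d) • convexHull ℝ (Set.range v))) =
      ((t : ℝ) + d + 1) • convexHull ℝ (Set.range v) :=
  iUnion_vadd_smul_convexHull_range v (by simp)

theorem stmt8 (n d : ℕ) (v : Fin (d + 1) → (Fin n → ℝ)) (hv : AffineIndependent ℝ v)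
    (t : ℕ) :
    (⋃ j, v j +ᵥ (((t : ℝ) + d) • convexHull ℝ (Set.range v))) =
      ((t : ℝ) + d + 1) • convexHull ℝ (Set.range v) :=
  stmt8_general n d v t
end

section
/- Let P ⊂ ℝⁿ be an integral simplex of dimension d with vertices v₀,…,v_d. Define ℓ_P(t) = #(t·P ∩ ℤⁿ) for t > 0 and ℓ_P(0) = 1. Then for all integers t ≥ 0, ℓ_P(t+d+1) = ∑_{k=0}^{d} (−1)^{d−k} C(d+1,k) ℓ_P(t+k). -/
open Pointwise

/-- Number of lattice points of a subset of `ℝⁿ`. -/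
noncomputable def latticeCount {n : ℕ} (S : Set (Fin n → ℝ)) : ℕ :=
  Set.ncard {x ∈ S | ∀ i, ∃ m : ℤ, x i = m}

/-!
Write the points of `t • P` in barycentric coordinates `w ≥ 0`, `∑ w = t`. Splitting `w` into
fractional and integer parts identifies the lattice points of `t • P` with pairs `(μ, a)`, where
`μ` runs over the finitely many lattice points of the half-open parallelepiped spanned by the
`(vⱼ, 1)` (of height `h μ = ∑ μ ≤ d`) and `a ∈ ℕ^(d+1)` has `∑ a = t - h μ`. Hence
`ℓ_P t = ∑_μ C(t + d - h μ, d)` for all `t ≥ 0`, a polynomial of degree at most `d` in `t`; its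
`(d+1)`-st forward difference vanishes, and that is the recurrence.
-/

open Finset Function fwdDiff

lemma fwdDiff_iter_succ_choose_add_eq_zero (d c : ℕ) :
    (Δ_[1])^[d + 1] (fun t : ℕ => ((t + c).choose d : ℤ)) = 0 := by
  have hd : (Δ_[1])^[d] (fun x : ℕ => (x.choose d : ℤ)) = fun _ => 1 := by
    simpa using fwdDiff_iter_choose 0 d
  funext t
  rw [fwdDiff_iter_comp_add (f := fun x : ℕ => (x.choose d : ℤ)), iterate_succ_apply', hd,
    fwdDiff_const, Pi.zero_apply]

lemma eq_sum_of_fwdDiff_iter_eq_zero {d : ℕ} {f : ℕ → ℤ} (hf : (Δ_[1])^[d + 1] f = 0) (t : ℕ) :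
    f (t + d + 1) = ∑ k ∈ range (d + 1), (-1 : ℤ) ^ (d - k) * (d + 1).choose k * f (t + k) := by
  have h := fwdDiff_iter_eq_sum_shift 1 f (d + 1) t
  rw [hf, sum_range_succ] at h
  simp only [Pi.zero_apply, smul_eq_mul, mul_one, Nat.sub_self, pow_zero, Nat.choose_self,
    Nat.cast_one, one_mul] at h
  rw [add_assoc, eq_neg_of_add_eq_zero_right h.symm, ← sum_neg_distrib]
  refine sum_congr rfl fun k hk => ?_
  rw [Nat.sub_add_comm (mem_range_succ_iff.mp hk), pow_succ]
  ring

lemma Nat.card_add_sum_eq_choose (d h t : ℕ) (hh : h ≤ d) :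
    Nat.card {a : Fin (d + 1) → ℕ // h + ∑ i, a i = t} = (t + d - h).choose d := by
  rcases le_or_gt h t with hht | hth
  · have e : {a : Fin (d + 1) → ℕ // h + ∑ i, a i = t} ≃ Sym (Fin (d + 1)) (t - h) :=
      ((Equiv.subtypeEquivRight fun a => by omega).trans (Sym.equivNatSumOfFintype _ _).symm)
    rw [Nat.card_congr e, Nat.card_eq_fintype_card, Sym.card_sym_eq_choose, Fintype.card_fin,
      show d + 1 + (t - h) - 1 = t - h + d by omega, show t + d - h = t - h + d by omega,
      Nat.choose_symm_add]
  · rw [Nat.choose_eq_zero_of_lt (by omega), Nat.card_eq_zero]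
    exact Or.inl ⟨fun a => by omega⟩

def IsLatticePoint {n : ℕ} (x : Fin n → ℝ) : Prop := ∀ i, ∃ m : ℤ, x i = m

section LatticePoint

variable {n : ℕ} {x y : Fin n → ℝ}

lemma IsLatticePoint.add (hx : IsLatticePoint x) (hy : IsLatticePoint y) :
    IsLatticePoint (x + y) := fun i => by
  obtain ⟨a, ha⟩ := hx i
  obtain ⟨b, hb⟩ := hy i
  exact ⟨a + b, by simp [ha, hb]⟩

lemma IsLatticePoint.sub (hx : IsLatticePoint x) (hy : IsLatticePoint y) :
    IsLatticePoint (x - y) := fun i => by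
  obtain ⟨a, ha⟩ := hx i
  obtain ⟨b, hb⟩ := hy i
  exact ⟨a - b, by simp [ha, hb]⟩

lemma isLatticePoint_sum_natCast_smul {ι : Type*} [Fintype ι] {v : ι → Fin n → ℝ}
    (hv : ∀ j, IsLatticePoint (v j)) (a : ι → ℕ) : IsLatticePoint (∑ j, (a j : ℝ) • v j) :=
  fun i => by
  choose m hm using hv
  exact ⟨∑ j, a j * m j i, by simp [hm]⟩

lemma Bornology.IsBounded.finite_setOf_isLatticePoint {S : Set (Fin n → ℝ)}
    (hS : Bornology.IsBounded S) : {x ∈ S | IsLatticePoint x}.Finite := by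
  obtain ⟨C, hC⟩ := hS.subset_closedBall 0
  let c : Fin n → ℤ := fun _ => ⌈C⌉
  refine ((Set.finite_Icc (-c) c).image fun z i => (z i : ℝ)).subset ?_
  rintro x ⟨hxS, hx⟩
  choose m hm using hx
  have hm_le : ∀ i, |m i| ≤ ⌈C⌉ := fun i => by
    have : |(m i : ℝ)| ≤ C :=
      hm i ▸ (norm_le_pi_norm x i).trans (mem_closedBall_zero_iff.mp (hC hxS))
    exact_mod_cast this.trans (Int.le_ceil C)
  exact ⟨m, ⟨fun i => neg_le_of_abs_le (hm_le i), fun i => le_of_abs_le (hm_le i)⟩,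
    funext fun i => (hm i).symm⟩

end LatticePoint

section ConvexHull

variable {ι E : Type*} [Fintype ι] [AddCommGroup E] [Module ℝ E] (v : ι → E)

lemma mem_convexHull_range_iff {x : E} :
    x ∈ convexHull ℝ (Set.range v) ↔
      ∃ w : ι → ℝ, (∀ j, 0 ≤ w j) ∧ ∑ j, w j = 1 ∧ ∑ j, w j • v j = x := by
  classical
  refine ⟨fun hx => ?_, fun ⟨w, hw₀, hw₁, hx⟩ =>
    mem_convexHull_of_exists_fintype w v hw₀ hw₁ (Set.mem_range_self) hx⟩
  rw [convexHull_range_eq_exists_affineCombination] at hx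
  obtain ⟨s, w, hw₀, hw₁, rfl⟩ := hx
  have hw₁' : ∑ j, Set.indicator (↑s) w j = 1 := by
    rwa [← sum_indicator_subset w (subset_univ s)] at hw₁
  refine ⟨Set.indicator (↑s) w, fun j => Set.indicator_nonneg (fun j hj => hw₀ j hj) j, hw₁', ?_⟩
  rw [affineCombination_indicator_subset w v (subset_univ s),
    affineCombination_eq_linear_combination _ _ _ hw₁']

lemma mem_smul_convexHull_range_iff {t : ℝ} (ht : 0 < t) {x : E} :
    x ∈ t • convexHull ℝ (Set.range v) ↔
      ∃ w : ι → ℝ, (∀ j, 0 ≤ w j) ∧ ∑ j, w j = t ∧ ∑ j, w j • v j = x := by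
  rw [Set.mem_smul_set_iff_inv_smul_mem₀ ht.ne', mem_convexHull_range_iff]
  constructor
  · rintro ⟨w, hw₀, hw₁, hx⟩
    refine ⟨t • w, fun j => mul_nonneg ht.le (hw₀ j), ?_, ?_⟩
    · simp [← mul_sum, hw₁]
    · simp [mul_smul, ← smul_sum, hx, smul_inv_smul₀ ht.ne']
  · rintro ⟨w, hw₀, hw₁, rfl⟩
    refine ⟨t⁻¹ • w, fun j => mul_nonneg (inv_nonneg.2 ht.le) (hw₀ j), ?_, ?_⟩
    · simp [← mul_sum, hw₁, ht.ne']
    · simp [mul_smul, ← smul_sum]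

end ConvexHull

section Slice

variable {ι : Type*} [Fintype ι] {n : ℕ} (v : ι → Fin n → ℝ)

/-- Barycentric coordinates of the lattice points of `t • convexHull ℝ (Set.range v)`. -/
def latticeSlice (t : ℝ) : Set (ι → ℝ) :=
  {w | (∀ j, 0 ≤ w j) ∧ ∑ j, w j = t ∧ IsLatticePoint (∑ j, w j • v j)}

lemma latticeSlice_zero : latticeSlice v 0 = {0} := by
  ext w
  refine ⟨fun ⟨hw₀, hw, _⟩ => funext fun j => (sum_eq_zero_iff_of_nonneg fun j _ => hw₀ j).1 hw j
    (mem_univ j), ?_⟩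
  rintro rfl
  exact ⟨fun _ => le_rfl, by simp, fun _ => ⟨0, by simp⟩⟩

lemma AffineIndependent.injOn_sum_smul (hv : AffineIndependent ℝ v) (t : ℝ) :
    Set.InjOn (fun w : ι → ℝ => ∑ j, w j • v j) {w | ∑ j, w j = t} :=
  fun _ hw _ hw' h => funext fun j => hv.eq_of_sum_eq_sum (hw.trans hw'.symm) h j (mem_univ j)

lemma AffineIndependent.latticeCount_smul_convexHull (hv : AffineIndependent ℝ v) {t : ℝ}
    (ht : 0 < t) : latticeCount (t • convexHull ℝ (Set.range v)) = (latticeSlice v t).ncard := by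
  have himage : {x ∈ t • convexHull ℝ (Set.range v) | IsLatticePoint x} =
      (fun w => ∑ j, w j • v j) '' latticeSlice v t := by
    ext x
    simp only [Set.mem_ofPred_eq, mem_smul_convexHull_range_iff v ht, latticeSlice, Set.mem_image]
    constructor
    · rintro ⟨⟨w, hw₀, hw, rfl⟩, hx⟩
      exact ⟨w, ⟨hw₀, hw, hx⟩, rfl⟩
    · rintro ⟨w, ⟨hw₀, hw, hx⟩, rfl⟩
      exact ⟨⟨w, hw₀, hw, rfl⟩, hx⟩
  change {x ∈ _ | IsLatticePoint x}.ncard = _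
  rw [himage, ((hv.injOn_sum_smul v t).mono fun w hw => hw.2.1).ncard_image]

lemma AffineIndependent.finite_latticeSlice (hv : AffineIndependent ℝ v) (t : ℝ) :
    (latticeSlice v t).Finite := by
  let F := fun w : ι → ℝ => ∑ j, w j • v j
  have hbdd : Bornology.IsBounded (F '' Set.Icc 0 fun _ => t) :=
    (isCompact_Icc.image (by fun_prop)).isBounded
  refine Set.Finite.of_finite_image (hbdd.finite_setOf_isLatticePoint.subset ?_)
    ((hv.injOn_sum_smul v t).mono fun w hw => hw.2.1)
  rintro _ ⟨w, ⟨hw₀, hw, hx⟩, rfl⟩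
  refine ⟨⟨w, ⟨hw₀, fun j => ?_⟩, rfl⟩, hx⟩
  rw [← hw]
  exact single_le_sum (fun j _ => hw₀ j) (mem_univ j)

end Slice

section Box

variable {ι : Type*} [Fintype ι] {n : ℕ} (v : ι → Fin n → ℝ)

/-- Coefficients `μ ∈ [0,1)^ι` of the lattice points `∑ μ j • (v j, 1)` of the half-open
parallelepiped spanned by the `(v j, 1)`. -/
def boxPoints : Set (ι → ℝ) := {μ | (∀ j, μ j < 1) ∧ ∃ m : ℕ, μ ∈ latticeSlice v m}

noncomputable def boxHeight (μ : ι → ℝ) : ℕ := ⌊∑ j, μ j⌋₊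

variable {v}

lemma sum_eq_boxHeight {μ : ι → ℝ} (hμ : μ ∈ boxPoints v) : ∑ j, μ j = boxHeight μ := by
  obtain ⟨-, m, -, hm, -⟩ := hμ
  rw [boxHeight, hm, Nat.floor_natCast]

lemma boxHeight_lt_card [Nonempty ι] {μ : ι → ℝ} (hμ : μ ∈ boxPoints v) :
    boxHeight μ < Fintype.card ι := by
  have : ∑ j, μ j < ∑ _j : ι, (1 : ℝ) := sum_lt_sum_of_nonempty univ_nonempty fun j _ => hμ.1 j
  rw [sum_eq_boxHeight hμ] at this
  simpa using this

lemma AffineIndependent.finite_boxPoints (hv : AffineIndependent ℝ v) : (boxPoints v).Finite := by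
  refine ((Set.finite_Iic (Fintype.card ι)).biUnion fun m _ => hv.finite_latticeSlice v m).subset ?_
  rintro μ hμ
  obtain ⟨hμ₁, m, hμm⟩ := hμ
  have : ∑ j, μ j ≤ ∑ _j : ι, (1 : ℝ) := sum_le_sum fun j _ => (hμ₁ j).le
  rw [hμm.2.1] at this
  exact Set.mem_biUnion (x := m) (by simpa using this) hμm

lemma sub_floor_mem_boxPoints (hint : ∀ j, IsLatticePoint (v j)) {t : ℕ} {w : ι → ℝ}
    (hw : w ∈ latticeSlice v t) :
    (fun j => w j - ⌊w j⌋₊) ∈ boxPoints v ∧ boxHeight (fun j => w j - ⌊w j⌋₊) + ∑ j, ⌊w j⌋₊ = t := by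
  obtain ⟨hw₀, hw, hx⟩ := hw
  have hle : ∑ j, ⌊w j⌋₊ ≤ t := by
    have : ∑ j, (⌊w j⌋₊ : ℝ) ≤ t := hw ▸ sum_le_sum fun j _ => Nat.floor_le (hw₀ j)
    exact_mod_cast this
  have hsum : ∑ j, (w j - ⌊w j⌋₊) = ((t - ∑ j, ⌊w j⌋₊ : ℕ) : ℝ) := by
    rw [sum_sub_distrib, hw, Nat.cast_sub hle, Nat.cast_sum]
  have hbox : (fun j => w j - ⌊w j⌋₊) ∈ boxPoints v := by
    refine ⟨fun j => by linarith [Nat.lt_floor_add_one (w j)], _,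
      fun j => sub_nonneg.2 (Nat.floor_le (hw₀ j)), hsum, ?_⟩
    simp only [sub_smul, sum_sub_distrib]
    exact hx.sub (isLatticePoint_sum_natCast_smul hint _)
  refine ⟨hbox, ?_⟩
  have := sum_eq_boxHeight hbox
  rw [hsum, Nat.cast_inj] at this
  omega

lemma add_mem_latticeSlice (hint : ∀ j, IsLatticePoint (v j)) {t : ℕ} {μ : ι → ℝ}
    (hμ : μ ∈ boxPoints v) {a : ι → ℕ} (ht : boxHeight μ + ∑ j, a j = t) :
    (fun j => μ j + a j) ∈ latticeSlice v t := by
  have hμsum := sum_eq_boxHeight hμ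
  obtain ⟨-, m, hμ₀, -, hx⟩ := hμ
  refine ⟨fun j => add_nonneg (hμ₀ j) (Nat.cast_nonneg _), ?_, ?_⟩
  · rw [sum_add_distrib, hμsum, ← ht]
    push_cast
    rfl
  · simp only [add_smul, sum_add_distrib]
    exact hx.add (isLatticePoint_sum_natCast_smul hint a)

noncomputable def latticeSliceEquiv (hint : ∀ j, IsLatticePoint (v j)) (t : ℕ) :
    latticeSlice v t ≃ {p : boxPoints v × (ι → ℕ) // boxHeight p.1.1 + ∑ j, p.2 j = t} where
  toFun w := ⟨(⟨_, (sub_floor_mem_boxPoints hint w.2).1⟩, fun j => ⌊w.1 j⌋₊),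
    (sub_floor_mem_boxPoints hint w.2).2⟩
  invFun p := ⟨_, add_mem_latticeSlice hint p.1.1.2 p.2⟩
  left_inv w := by ext j; simp
  right_inv p := by
    have hfloor : ∀ j, ⌊p.1.1.1 j + p.1.2 j⌋₊ = p.1.2 j := fun j => by
      obtain ⟨hμ₁, -, hμ₀, -⟩ := p.1.1.2
      rw [Nat.floor_add_natCast (hμ₀ j), Nat.floor_eq_zero.2 (hμ₁ j), zero_add]
    ext j <;> simp [hfloor]

instance finite_subtype_add_sum_eq (h t : ℕ) : Finite {a : ι → ℕ // h + ∑ j, a j = t} := by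
  classical
  refine Set.Finite.to_subtype
    ((Set.finite_Iic fun _ => t).subset fun a (ha : h + ∑ j, a j = t) j => ?_)
  show a j ≤ t
  have := single_le_sum (fun j _ => Nat.zero_le (a j)) (mem_univ j)
  omega

lemma ncard_latticeSlice [Fintype (boxPoints v)] (hint : ∀ j, IsLatticePoint (v j)) (t : ℕ) :
    (latticeSlice v t).ncard =
      ∑ μ : boxPoints v, Nat.card {a : ι → ℕ // boxHeight μ.1 + ∑ j, a j = t} := by
  rw [← Nat.card_coe_set_eq, Nat.card_congr ((latticeSliceEquiv hint t).trans
    (Equiv.subtypeProdEquivSigmaSubtype fun (μ : boxPoints v) (a : ι → ℕ) =>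
      boxHeight μ.1 + ∑ j, a j = t)), Nat.card_sigma]

end Box

theorem stmt10 (n d : ℕ) (v : Fin (d + 1) → (Fin n → ℝ))
    (hv : AffineIndependent ℝ v) (hint : ∀ j i, ∃ m : ℤ, v j i = m)
    (ℓ : ℕ → ℕ) (hℓ0 : ℓ 0 = 1)
    (hℓ : ∀ t : ℕ, 0 < t → ℓ t = latticeCount ((t : ℝ) • convexHull ℝ (Set.range v))) :
    ∀ t : ℕ, (ℓ (t + d + 1) : ℤ) =
      ∑ k ∈ Finset.range (d + 1), (-1 : ℤ) ^ (d - k) * (d + 1).choose k * ℓ (t + k) := by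
  let : Fintype (boxPoints v) := hv.finite_boxPoints.fintype
  have hℓ_slice : ∀ t : ℕ, ℓ t = (latticeSlice v t).ncard := by
    rintro (_ | t)
    · simp [hℓ0, latticeSlice_zero]
    · rw [hℓ _ t.succ_pos, hv.latticeCount_smul_convexHull v (by positivity)]
  have hℓ_sum : (fun t => (ℓ t : ℤ)) =
      ∑ μ : boxPoints v, fun t : ℕ => ((t + (d - boxHeight μ.1)).choose d : ℤ) := by
    funext t
    rw [hℓ_slice, ncard_latticeSlice hint, Finset.sum_apply, Nat.cast_sum]
    refine sum_congr rfl fun μ _ => ?_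
    have hμ : boxHeight μ.1 < d + 1 := by simpa using boxHeight_lt_card μ.2
    rw [Nat.card_add_sum_eq_choose d _ t (by omega), ← Nat.add_sub_assoc (by omega)]
  intro t
  refine eq_sum_of_fwdDiff_iter_eq_zero (f := fun t => (ℓ t : ℤ)) ?_ t
  rw [hℓ_sum, fwdDiff_iter_finsetSum]
  exact sum_eq_zero fun μ _ => fwdDiff_iter_succ_choose_add_eq_zero d _
end
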